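/- In the saddle-point setting, with M_U = [[F, Bᵀ],[0, H2]] and H = blockdiag(H1, H2), the inverse of the preconditioned matrix satisfies ‖(M_U⁻¹K)⁻¹‖_H ≤ 2 + (2C₁² + C₁ + 1)(1 + η)²/C₂². -/

import Mathlib

/-! Put `w = (MU⁻¹ K)⁻¹ v`, so that `K w = MU v`, and split `v = (x, y)` and
`e = w - v = (e₁, e₂)`. The block rows say `F e₁ + Bᵀ e₂ = 0` and `B e₁ = H2 y - B x`. Since the skew part `N` drops out
of the quadratic form of `F`, testing the first row with `e₁` gives the energy identity
`‖e₁‖²_{H1} = -e₁ᵀ Bᵀ e₂ = e₂ᵀ (B x - H2 y)`. Its first form yields `‖e₁‖ ≤ C₁ ‖e₂‖`, its second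
`‖e₁‖² ≤ ‖e₂‖ (C₁ ‖x‖ + ‖y‖)`; the inf-sup condition and `‖F‖_{H1,H1⁻¹} ≤ 1 + η` give
`C₂ ‖e₂‖ ≤ (1 + η) ‖e₁‖`. Together, `‖e₂‖ ≤ γ (C₁ ‖x‖ + ‖y‖)` with `γ = (1 + η)² / C₂²`, so
`‖w‖_H ≤ ‖v‖_H + ‖e‖_H ≤ (1 + (1 + C₁²) γ) ‖v‖_H`, which is below the stated bound. -/

open Matrix

/-- The `H`-norm of a vector: `‖u‖_H = (uᵀ H u)^{1/2}`. -/
noncomputable def vnorm {α : Type*} [Fintype α] (H : Matrix α α ℝ) (u : α → ℝ) : ℝ :=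
  Real.sqrt (u ⬝ᵥ (H *ᵥ u))

/-- The weighted operator norm `‖M‖_{H1,H2} = sup_{v ≠ 0} ‖M v‖_{H2} / ‖v‖_{H1}`.
For a square matrix, `‖M‖_H = wnorm H H M`; the spectral norm is `wnorm 1 1 M`. -/
noncomputable def wnorm {α β : Type*} [Fintype α] [Fintype β]
    (H1 : Matrix α α ℝ) (H2 : Matrix β β ℝ) (M : Matrix β α ℝ) : ℝ :=
  sSup {r : ℝ | ∃ v : α → ℝ, v ≠ 0 ∧ r = vnorm H2 (M *ᵥ v) / vnorm H1 v}

lemma le_of_sq_le_mul {s c : ℝ} (hc : 0 ≤ c) (h : s ^ 2 ≤ s * c) : s ≤ c := by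
  nlinarith

lemma sqrt_sq_add_sq_le {s t a b c g : ℝ} (hs : 0 ≤ s) (ht : 0 ≤ t) (hg : 0 ≤ g)
    (hst : s ≤ c * t) (hta : t ≤ g * (c * a + b)) :
    √(s ^ 2 + t ^ 2) ≤ (c ^ 2 + 1) * g * √(a ^ 2 + b ^ 2) := by
  have hs2 : s ^ 2 ≤ c ^ 2 * t ^ 2 := by nlinarith [pow_le_pow_left₀ hs hst 2]
  have ht2 : t ^ 2 ≤ g ^ 2 * ((c ^ 2 + 1) * (a ^ 2 + b ^ 2)) := by
    have hcs : (c * a + b) ^ 2 ≤ (c ^ 2 + 1) * (a ^ 2 + b ^ 2) := by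
      nlinarith [sq_nonneg (c * b - a)]
    nlinarith [pow_le_pow_left₀ ht hta 2, mul_le_mul_of_nonneg_left hcs (sq_nonneg g)]
  rw [← Real.sqrt_sq (by positivity : 0 ≤ (c ^ 2 + 1) * g), ← Real.sqrt_mul (sq_nonneg _)]
  exact Real.sqrt_le_sqrt (by nlinarith)

section QuadraticForm

variable {α : Type*} [Fintype α]

lemma dotProduct_mulVec_self_nonneg {P : Matrix α α ℝ} (hP : P.PosSemidef) (v : α → ℝ) :
    0 ≤ v ⬝ᵥ (P *ᵥ v) :=
  hP.dotProduct_mulVec_nonneg v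

lemma dotProduct_mulVec_self_pos {P : Matrix α α ℝ} (hP : P.PosDef) {v : α → ℝ} (hv : v ≠ 0) :
    0 < v ⬝ᵥ (P *ᵥ v) :=
  hP.dotProduct_mulVec_pos hv

lemma dotProduct_mulVec_comm {P : Matrix α α ℝ} (hP : P.IsHermitian) (v w : α → ℝ) :
    v ⬝ᵥ (P *ᵥ w) = w ⬝ᵥ (P *ᵥ v) := by
  rw [← dotProduct_transpose_mulVec, ← conjTranspose_eq_transpose_of_trivial, hP.eq]

lemma sq_dotProduct_mulVec_le {P : Matrix α α ℝ} (hP : P.PosSemidef) (v w : α → ℝ) :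
    (v ⬝ᵥ (P *ᵥ w)) ^ 2 ≤ (v ⬝ᵥ (P *ᵥ v)) * (w ⬝ᵥ (P *ᵥ w)) := by
  have hsymm := dotProduct_mulVec_comm hP.isHermitian w v
  have hquad : ∀ t : ℝ,
      0 ≤ (w ⬝ᵥ (P *ᵥ w)) * (t * t) + 2 * (v ⬝ᵥ (P *ᵥ w)) * t + v ⬝ᵥ (P *ᵥ v) := by
    intro t
    have h := dotProduct_mulVec_self_nonneg hP (v + t • w)
    simp only [mulVec_add, mulVec_smul, dotProduct_add, add_dotProduct, dotProduct_smul,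
      smul_dotProduct, smul_eq_mul, hsymm] at h
    nlinarith
  have hdisc := discrim_le_zero hquad
  rw [discrim] at hdisc
  nlinarith

lemma dotProduct_mulVec_le_sum_abs_mul (R : Matrix α α ℝ) (w : α → ℝ) :
    w ⬝ᵥ (R *ᵥ w) ≤ (∑ i, ∑ j, |R i j|) * (w ⬝ᵥ w) := by
  have hsq : ∀ i, w i ^ 2 ≤ w ⬝ᵥ w := fun i => by
    simpa only [dotProduct, sq] using
      Finset.single_le_sum (fun j _ => mul_self_nonneg (w j)) (Finset.mem_univ i)
  have hterm : ∀ i j, w i * (R i j * w j) ≤ |R i j| * (w ⬝ᵥ w) := fun i j => by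
    have hij : |w i * w j| ≤ w ⬝ᵥ w := by
      rw [abs_mul]
      nlinarith [hsq i, hsq j, sq_abs (w i), sq_abs (w j), two_mul_le_add_sq |w i| |w j|]
    calc w i * (R i j * w j) ≤ |R i j| * |w i * w j| := by
          rw [← abs_mul]; exact (le_abs_self _).trans_eq (by ring_nf)
      _ ≤ |R i j| * (w ⬝ᵥ w) := mul_le_mul_of_nonneg_left hij (abs_nonneg _)
  calc w ⬝ᵥ (R *ᵥ w) = ∑ i, ∑ j, w i * (R i j * w j) := by
        simp only [dotProduct, mulVec, Finset.mul_sum]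
    _ ≤ ∑ i, ∑ j, |R i j| * (w ⬝ᵥ w) :=
        Finset.sum_le_sum fun i _ => Finset.sum_le_sum fun j _ => hterm i j
    _ = (∑ i, ∑ j, |R i j|) * (w ⬝ᵥ w) := by simp only [Finset.sum_mul]

lemma dotProduct_mulVec_symmPart (F : Matrix α α ℝ) (z : α → ℝ) :
    z ⬝ᵥ ((((1 : ℝ) / 2) • (F + Fᵀ)) *ᵥ z) = z ⬝ᵥ (F *ᵥ z) := by
  rw [smul_mulVec, add_mulVec, dotProduct_smul, dotProduct_add, dotProduct_transpose_mulVec,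
    smul_eq_mul]
  ring

variable {β : Type*} [Fintype β]

lemma dotProduct_fromBlocks_zero_mulVec (P : Matrix α α ℝ) (Q : Matrix β β ℝ) (v : α ⊕ β → ℝ) :
    v ⬝ᵥ (fromBlocks P 0 0 Q *ᵥ v)
      = (v ∘ Sum.inl) ⬝ᵥ (P *ᵥ (v ∘ Sum.inl)) + (v ∘ Sum.inr) ⬝ᵥ (Q *ᵥ (v ∘ Sum.inr)) := by
  simp [fromBlocks_mulVec, dotProduct, Fintype.sum_sum_type]

lemma posSemidef_fromBlocks_zero {P : Matrix α α ℝ} {Q : Matrix β β ℝ} (hP : P.PosSemidef)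
    (hQ : Q.PosSemidef) : (fromBlocks P 0 0 Q).PosSemidef :=
  .of_dotProduct_mulVec_nonneg (hP.isHermitian.fromBlocks (by simp) hQ.isHermitian) fun v => by
    simpa only [star_trivial, dotProduct_fromBlocks_zero_mulVec] using
      add_nonneg (dotProduct_mulVec_self_nonneg hP _) (dotProduct_mulVec_self_nonneg hQ _)

end QuadraticForm

section WeightedNorm

variable {α β : Type*} [Fintype α] [Fintype β] {P : Matrix α α ℝ} {Q : Matrix β β ℝ}

lemma vnorm_nonneg (P : Matrix α α ℝ) (v : α → ℝ) : 0 ≤ vnorm P v := Real.sqrt_nonneg _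

@[simp]
lemma vnorm_zero (P : Matrix α α ℝ) : vnorm P 0 = 0 := by simp [vnorm]

lemma vnorm_neg (P : Matrix α α ℝ) (v : α → ℝ) : vnorm P (-v) = vnorm P v := by
  simp [vnorm, mulVec_neg]

lemma vnorm_sq (hP : P.PosSemidef) (v : α → ℝ) : vnorm P v ^ 2 = v ⬝ᵥ (P *ᵥ v) :=
  Real.sq_sqrt (dotProduct_mulVec_self_nonneg hP v)

lemma vnorm_pos (hP : P.PosDef) {v : α → ℝ} (hv : v ≠ 0) : 0 < vnorm P v :=
  Real.sqrt_pos.mpr (dotProduct_mulVec_self_pos hP hv)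

lemma dotProduct_mulVec_le_vnorm_mul (hP : P.PosSemidef) (v w : α → ℝ) :
    v ⬝ᵥ (P *ᵥ w) ≤ vnorm P v * vnorm P w := by
  rw [vnorm, vnorm, ← Real.sqrt_mul (dotProduct_mulVec_self_nonneg hP v)]
  exact (le_abs_self _).trans (Real.abs_le_sqrt (sq_dotProduct_mulVec_le hP v w))

lemma vnorm_add_le (hP : P.PosSemidef) (v w : α → ℝ) :
    vnorm P (v + w) ≤ vnorm P v + vnorm P w := by
  have hvw := dotProduct_mulVec_le_vnorm_mul hP v w
  have hwv := dotProduct_mulVec_le_vnorm_mul hP w v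
  refine Real.sqrt_le_iff.mpr ⟨add_nonneg (vnorm_nonneg _ _) (vnorm_nonneg _ _), ?_⟩
  simp only [mulVec_add, dotProduct_add, add_dotProduct]
  rw [← vnorm_sq hP v, ← vnorm_sq hP w]
  nlinarith

lemma vnorm_sub_le (hP : P.PosSemidef) (v w : α → ℝ) :
    vnorm P (v - w) ≤ vnorm P v + vnorm P w := by
  simpa only [sub_eq_add_neg, vnorm_neg] using vnorm_add_le hP v (-w)

lemma vnorm_fromBlocks_zero (hP : P.PosSemidef) (hQ : Q.PosSemidef) (v : α ⊕ β → ℝ) :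
    vnorm (fromBlocks P 0 0 Q) v
      = √(vnorm P (v ∘ Sum.inl) ^ 2 + vnorm Q (v ∘ Sum.inr) ^ 2) := by
  rw [vnorm_sq hP, vnorm_sq hQ, vnorm, dotProduct_fromBlocks_zero_mulVec]

lemma wnorm_nonneg (P : Matrix α α ℝ) (Q : Matrix β β ℝ) (M : Matrix β α ℝ) :
    0 ≤ wnorm P Q M :=
  Real.sSup_nonneg <| by
    rintro _ ⟨v, -, rfl⟩
    exact div_nonneg (vnorm_nonneg _ _) (vnorm_nonneg _ _)

lemma wnorm_le_of_forall_vnorm_le {M : Matrix β α ℝ} {C : ℝ} (hC : 0 ≤ C)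
    (h : ∀ v, vnorm Q (M *ᵥ v) ≤ C * vnorm P v) : wnorm P Q M ≤ C :=
  Real.sSup_le (by rintro _ ⟨v, -, rfl⟩; exact div_le_of_le_mul₀ (vnorm_nonneg _ _) hC (h v)) hC

variable [DecidableEq α]

lemma vnorm_inv_mulVec (hP : P.PosDef) (v : α → ℝ) : vnorm P⁻¹ (P *ᵥ v) = vnorm P v := by
  rw [vnorm, vnorm, mulVec_mulVec, nonsing_inv_mul P hP.det_pos.ne'.isUnit, one_mulVec,
    dotProduct_comm]

lemma vnorm_mulVec_inv (hP : P.PosDef) (c : α → ℝ) : vnorm P (P⁻¹ *ᵥ c) = vnorm P⁻¹ c := by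
  rw [vnorm, vnorm, mulVec_mulVec, mul_nonsing_inv P hP.det_pos.ne'.isUnit, one_mulVec,
    dotProduct_comm]

lemma dotProduct_le_vnorm_mul_vnorm_inv (hP : P.PosDef) (v c : α → ℝ) :
    v ⬝ᵥ c ≤ vnorm P v * vnorm P⁻¹ c := by
  have hc : P *ᵥ (P⁻¹ *ᵥ c) = c := by
    rw [mulVec_mulVec, mul_nonsing_inv P hP.det_pos.ne'.isUnit, one_mulVec]
  calc v ⬝ᵥ c = v ⬝ᵥ (P *ᵥ (P⁻¹ *ᵥ c)) := by rw [hc]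
    _ ≤ vnorm P v * vnorm P (P⁻¹ *ᵥ c) := dotProduct_mulVec_le_vnorm_mul hP.posSemidef _ _
    _ = vnorm P v * vnorm P⁻¹ c := by rw [vnorm_mulVec_inv hP]

lemma dotProduct_self_le_mul_dotProduct_mulVec (hP : P.PosDef) (v : α → ℝ) :
    v ⬝ᵥ v ≤ (∑ i, ∑ j, |P⁻¹ i j|) * (v ⬝ᵥ (P *ᵥ v)) := by
  have hv : 0 ≤ v ⬝ᵥ v := Finset.sum_nonneg fun i _ => mul_self_nonneg (v i)
  have hPv := dotProduct_mulVec_self_nonneg hP.posSemidef v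
  have hsq : (v ⬝ᵥ v) ^ 2 ≤ (v ⬝ᵥ (P *ᵥ v)) * (v ⬝ᵥ (P⁻¹ *ᵥ v)) := by
    rw [← vnorm_sq hP.posSemidef, ← vnorm_sq hP.inv.posSemidef, ← mul_pow]
    exact pow_le_pow_left₀ hv (dotProduct_le_vnorm_mul_vnorm_inv hP v v) 2
  have hinv := mul_le_mul_of_nonneg_left (dotProduct_mulVec_le_sum_abs_mul P⁻¹ v) hPv
  rcases hv.eq_or_lt with hv0 | hvpos
  · rw [← hv0]; positivity
  · nlinarith

-- The crude entrywise constants only serve to show that the supremum defining `wnorm` is finite.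
lemma bddAbove_wnorm_set (hP : P.PosDef) (Q : Matrix β β ℝ) (M : Matrix β α ℝ) :
    BddAbove {r : ℝ | ∃ v : α → ℝ, v ≠ 0 ∧ r = vnorm Q (M *ᵥ v) / vnorm P v} := by
  set a := ∑ i, ∑ j, |(Mᵀ * Q * M) i j|
  set b := ∑ i, ∑ j, |P⁻¹ i j|
  refine ⟨√(a * b), ?_⟩
  rintro _ ⟨v, -, rfl⟩
  refine div_le_of_le_mul₀ (vnorm_nonneg _ _) (Real.sqrt_nonneg _) ?_
  have hMv : M *ᵥ v ⬝ᵥ (Q *ᵥ (M *ᵥ v)) = v ⬝ᵥ ((Mᵀ * Q * M) *ᵥ v) := by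
    rw [← mulVec_mulVec, ← mulVec_mulVec, dotProduct_transpose_mulVec, dotProduct_comm]
  calc vnorm Q (M *ᵥ v) = √(v ⬝ᵥ ((Mᵀ * Q * M) *ᵥ v)) := by rw [vnorm, hMv]
    _ ≤ √(a * (b * (v ⬝ᵥ (P *ᵥ v)))) :=
        Real.sqrt_le_sqrt ((dotProduct_mulVec_le_sum_abs_mul _ v).trans
          (mul_le_mul_of_nonneg_left (dotProduct_self_le_mul_dotProduct_mulVec hP v)
            (by positivity)))
    _ = √(a * b) * vnorm P v := by rw [← mul_assoc, Real.sqrt_mul (by positivity)]; rfl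

lemma vnorm_mulVec_le_of_wnorm_le (hP : P.PosDef) {M : Matrix β α ℝ} {C : ℝ}
    (h : wnorm P Q M ≤ C) (v : α → ℝ) : vnorm Q (M *ᵥ v) ≤ C * vnorm P v := by
  rcases eq_or_ne v 0 with rfl | hv
  · simp
  have hratio : vnorm Q (M *ᵥ v) / vnorm P v ≤ C :=
    (le_csSup (bddAbove_wnorm_set hP Q M) ⟨v, hv, rfl⟩).trans h
  rwa [div_le_iff₀ (vnorm_pos hP hv)] at hratio

lemma wnorm_inv_le {A : Matrix α α ℝ} {C : ℝ} (hC : 0 ≤ C)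
    (h : ∀ w, vnorm P w ≤ C * vnorm P (A *ᵥ w)) : wnorm P P A⁻¹ ≤ C := by
  refine wnorm_le_of_forall_vnorm_le hC fun v => ?_
  by_cases hA : IsUnit A.det
  · simpa [mulVec_mulVec, mul_nonsing_inv A hA] using h (A⁻¹ *ᵥ v)
  · simpa [nonsing_inv_apply_not_isUnit A hA] using mul_nonneg hC (vnorm_nonneg P v)

variable [DecidableEq β]

lemma vnorm_inv_transpose_mulVec_le (hP : P.PosDef) (hQ : Q.PosDef) {M : Matrix β α ℝ} {C : ℝ}
    (hC : 0 ≤ C) (hM : ∀ v, vnorm Q⁻¹ (M *ᵥ v) ≤ C * vnorm P v) (q : β → ℝ) :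
    vnorm P⁻¹ (Mᵀ *ᵥ q) ≤ C * vnorm Q q := by
  set v := P⁻¹ *ᵥ (Mᵀ *ᵥ q)
  refine le_of_sq_le_mul (mul_nonneg hC (vnorm_nonneg _ _)) ?_
  calc vnorm P⁻¹ (Mᵀ *ᵥ q) ^ 2 = q ⬝ᵥ (M *ᵥ v) := by
        rw [vnorm_sq hP.inv.posSemidef, dotProduct_comm, dotProduct_transpose_mulVec]
    _ ≤ vnorm Q q * vnorm Q⁻¹ (M *ᵥ v) := dotProduct_le_vnorm_mul_vnorm_inv hQ _ _
    _ ≤ vnorm Q q * (C * vnorm P v) := mul_le_mul_of_nonneg_left (hM v) (vnorm_nonneg _ _)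
    _ = vnorm P⁻¹ (Mᵀ *ᵥ q) * (C * vnorm Q q) := by rw [vnorm_mulVec_inv hP]; ring

end WeightedNorm

section SaddlePoint

variable {ι κ : Type*} [Fintype ι] [Fintype κ]
  {F H1 N : Matrix ι ι ℝ} {B : Matrix κ ι ℝ} {H2 : Matrix κ κ ℝ} {η C₁ C₂ : ℝ}

lemma vnorm_sq_eq_of_saddle (hH1 : H1 = ((1 : ℝ) / 2) • (F + Fᵀ)) (hH1psd : H1.PosSemidef)
    {e₁ : ι → ℝ} {e₂ : κ → ℝ} (he : F *ᵥ e₁ + Bᵀ *ᵥ e₂ = 0) :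
    vnorm H1 e₁ ^ 2 = e₁ ⬝ᵥ -(Bᵀ *ᵥ e₂) := by
  rw [vnorm_sq hH1psd, hH1, dotProduct_mulVec_symmPart, eq_neg_of_add_eq_zero_left he]

variable [DecidableEq ι]

lemma det_ne_zero_of_posDef_symmPart (hF : (((1 : ℝ) / 2) • (F + Fᵀ)).PosDef) : F.det ≠ 0 := by
  intro h
  obtain ⟨v, hv, hFv⟩ := exists_mulVec_eq_zero_iff.mpr h
  have hpos := dotProduct_mulVec_self_pos hF hv
  rw [dotProduct_mulVec_symmPart, hFv, dotProduct_zero] at hpos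
  exact hpos.false

lemma vnorm_inv_mulVec_le_of_symmPart (hH1 : H1 = ((1 : ℝ) / 2) • (F + Fᵀ))
    (hN : N = ((1 : ℝ) / 2) • (F - Fᵀ)) (hH1pd : H1.PosDef)
    (hNle : ∀ z, vnorm H1⁻¹ (N *ᵥ z) ≤ η * vnorm H1 z) (z : ι → ℝ) :
    vnorm H1⁻¹ (F *ᵥ z) ≤ (1 + η) * vnorm H1 z := by
  have hF : F = H1 + N := by rw [hH1, hN]; module
  calc vnorm H1⁻¹ (F *ᵥ z) = vnorm H1⁻¹ (H1 *ᵥ z + N *ᵥ z) := by rw [hF, add_mulVec]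
    _ ≤ vnorm H1⁻¹ (H1 *ᵥ z) + vnorm H1⁻¹ (N *ᵥ z) := vnorm_add_le hH1pd.inv.posSemidef _ _
    _ ≤ vnorm H1 z + η * vnorm H1 z := by rw [vnorm_inv_mulVec hH1pd]; gcongr; exact hNle z
    _ = (1 + η) * vnorm H1 z := by ring

lemma vnorm_le_of_saddle (hH1 : H1 = ((1 : ℝ) / 2) • (F + Fᵀ)) (hH1pd : H1.PosDef)
    (hC₁ : 0 ≤ C₁) (hBt : ∀ q, vnorm H1⁻¹ (Bᵀ *ᵥ q) ≤ C₁ * vnorm H2 q)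
    {e₁ : ι → ℝ} {e₂ : κ → ℝ} (he : F *ᵥ e₁ + Bᵀ *ᵥ e₂ = 0) :
    vnorm H1 e₁ ≤ C₁ * vnorm H2 e₂ := by
  refine le_of_sq_le_mul (mul_nonneg hC₁ (vnorm_nonneg _ _)) ?_
  calc vnorm H1 e₁ ^ 2 = e₁ ⬝ᵥ -(Bᵀ *ᵥ e₂) := vnorm_sq_eq_of_saddle hH1 hH1pd.posSemidef he
    _ ≤ vnorm H1 e₁ * vnorm H1⁻¹ (-(Bᵀ *ᵥ e₂)) := dotProduct_le_vnorm_mul_vnorm_inv hH1pd _ _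
    _ ≤ vnorm H1 e₁ * (C₁ * vnorm H2 e₂) := by
        rw [vnorm_neg]; exact mul_le_mul_of_nonneg_left (hBt e₂) (vnorm_nonneg _ _)

lemma sq_mul_vnorm_le_of_saddle [DecidableEq κ] (hH1 : H1 = ((1 : ℝ) / 2) • (F + Fᵀ))
    (hH1pd : H1.PosDef) (hH2pd : H2.PosDef) (hC₂ : 0 ≤ C₂)
    (hF : ∀ z, vnorm H1⁻¹ (F *ᵥ z) ≤ (1 + η) * vnorm H1 z)
    (hB : ∀ z, vnorm H2⁻¹ (B *ᵥ z) ≤ C₁ * vnorm H1 z)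
    (hinf : ∀ q, C₂ * vnorm H2 q ≤ vnorm H1⁻¹ (Bᵀ *ᵥ q))
    {e₁ x : ι → ℝ} {e₂ y : κ → ℝ} (he₁ : F *ᵥ e₁ + Bᵀ *ᵥ e₂ = 0)
    (he₂ : B *ᵥ e₁ = H2 *ᵥ y - B *ᵥ x) :
    C₂ ^ 2 * vnorm H2 e₂ ≤ (1 + η) ^ 2 * (C₁ * vnorm H1 x + vnorm H2 y) := by
  have hlow : C₂ * vnorm H2 e₂ ≤ (1 + η) * vnorm H1 e₁ := calc
    C₂ * vnorm H2 e₂ ≤ vnorm H1⁻¹ (Bᵀ *ᵥ e₂) := hinf e₂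
    _ = vnorm H1⁻¹ (F *ᵥ e₁) := by rw [eq_neg_of_add_eq_zero_right he₁, vnorm_neg]
    _ ≤ (1 + η) * vnorm H1 e₁ := hF e₁
  have hres : vnorm H2⁻¹ (B *ᵥ x - H2 *ᵥ y) ≤ C₁ * vnorm H1 x + vnorm H2 y := by
    refine (vnorm_sub_le hH2pd.inv.posSemidef _ _).trans ?_
    rw [vnorm_inv_mulVec hH2pd]
    linarith [hB x]
  have hup : vnorm H1 e₁ ^ 2 ≤ vnorm H2 e₂ * (C₁ * vnorm H1 x + vnorm H2 y) := calc
    vnorm H1 e₁ ^ 2 = e₂ ⬝ᵥ (B *ᵥ x - H2 *ᵥ y) := by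
      rw [vnorm_sq_eq_of_saddle hH1 hH1pd.posSemidef he₁, dotProduct_neg,
        dotProduct_transpose_mulVec, he₂, ← dotProduct_neg, neg_sub]
    _ ≤ vnorm H2 e₂ * vnorm H2⁻¹ (B *ᵥ x - H2 *ᵥ y) :=
      dotProduct_le_vnorm_mul_vnorm_inv hH2pd _ _
    _ ≤ vnorm H2 e₂ * (C₁ * vnorm H1 x + vnorm H2 y) :=
      mul_le_mul_of_nonneg_left hres (vnorm_nonneg _ _)
  rcases (vnorm_nonneg H2 e₂).eq_or_lt with ht0 | htpos
  · rw [← ht0, mul_zero]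
    exact mul_nonneg (sq_nonneg _) ((vnorm_nonneg _ _).trans hres)
  have hsq := pow_le_pow_left₀ (mul_nonneg hC₂ htpos.le) hlow 2
  refine le_of_mul_le_mul_right ?_ htpos
  nlinarith [mul_le_mul_of_nonneg_left hup (sq_nonneg (1 + η))]

lemma vnorm_le_of_fromBlocks_mulVec_eq [DecidableEq κ] (hH1 : H1 = ((1 : ℝ) / 2) • (F + Fᵀ))
    (hH1pd : H1.PosDef) (hH2pd : H2.PosDef) (hC₁ : 0 ≤ C₁) (hC₂ : 0 < C₂)
    (hF : ∀ z, vnorm H1⁻¹ (F *ᵥ z) ≤ (1 + η) * vnorm H1 z)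
    (hB : ∀ z, vnorm H2⁻¹ (B *ᵥ z) ≤ C₁ * vnorm H1 z)
    (hinf : ∀ q, C₂ * vnorm H2 q ≤ vnorm H1⁻¹ (Bᵀ *ᵥ q))
    {w v : ι ⊕ κ → ℝ} (hwv : fromBlocks F Bᵀ B 0 *ᵥ w = fromBlocks F Bᵀ 0 H2 *ᵥ v) :
    vnorm (fromBlocks H1 0 0 H2) w
      ≤ (1 + (C₁ ^ 2 + 1) * ((1 + η) ^ 2 / C₂ ^ 2)) * vnorm (fromBlocks H1 0 0 H2) v := by
  have hrow₁ : F *ᵥ (w ∘ Sum.inl) + Bᵀ *ᵥ (w ∘ Sum.inr)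
      = F *ᵥ (v ∘ Sum.inl) + Bᵀ *ᵥ (v ∘ Sum.inr) := by
    funext i; simpa [fromBlocks_mulVec] using congrFun hwv (Sum.inl i)
  have hrow₂ : B *ᵥ (w ∘ Sum.inl) = H2 *ᵥ (v ∘ Sum.inr) := by
    funext i; simpa [fromBlocks_mulVec] using congrFun hwv (Sum.inr i)
  set e := w - v
  have he₁ : F *ᵥ (e ∘ Sum.inl) + Bᵀ *ᵥ (e ∘ Sum.inr) = 0 := by
    simp only [e, Pi.sub_comp, mulVec_sub]
    rw [sub_add_sub_comm, hrow₁, sub_self]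
  have he₂ : B *ᵥ (e ∘ Sum.inl) = H2 *ᵥ (v ∘ Sum.inr) - B *ᵥ (v ∘ Sum.inl) := by
    simp only [e, Pi.sub_comp, mulVec_sub, hrow₂]
  have hs := vnorm_le_of_saddle hH1 hH1pd hC₁
    (vnorm_inv_transpose_mulVec_le hH1pd hH2pd hC₁ hB) he₁
  have ht : vnorm H2 (e ∘ Sum.inr)
      ≤ (1 + η) ^ 2 / C₂ ^ 2 * (C₁ * vnorm H1 (v ∘ Sum.inl) + vnorm H2 (v ∘ Sum.inr)) := by
    rw [div_mul_eq_mul_div, le_div_iff₀ (by positivity), mul_comm]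
    exact sq_mul_vnorm_le_of_saddle hH1 hH1pd hH2pd hC₂.le hF hB hinf he₁ he₂
  have hH1psd := hH1pd.posSemidef
  have hH2psd := hH2pd.posSemidef
  calc vnorm (fromBlocks H1 0 0 H2) w = vnorm (fromBlocks H1 0 0 H2) (v + e) := by
        rw [add_sub_cancel]
    _ ≤ vnorm (fromBlocks H1 0 0 H2) v + vnorm (fromBlocks H1 0 0 H2) e :=
        vnorm_add_le (posSemidef_fromBlocks_zero hH1psd hH2psd) _ _
    _ ≤ vnorm (fromBlocks H1 0 0 H2) v
          + (C₁ ^ 2 + 1) * ((1 + η) ^ 2 / C₂ ^ 2) * vnorm (fromBlocks H1 0 0 H2) v := by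
        rw [vnorm_fromBlocks_zero hH1psd hH2psd e, vnorm_fromBlocks_zero hH1psd hH2psd v]
        gcongr
        exact sqrt_sq_add_sq_le (vnorm_nonneg _ _) (vnorm_nonneg _ _) (by positivity) hs ht
    _ = _ := by ring

end SaddlePoint

theorem stmt_6_general
    {n m : ℕ} (F : Matrix (Fin n) (Fin n) ℝ) (B : Matrix (Fin m) (Fin n) ℝ)
    (H1 N : Matrix (Fin n) (Fin n) ℝ) (H2 : Matrix (Fin m) (Fin m) ℝ)
    (η C₁ C₂ : ℝ) (hC2 : 0 < C₂)
    (hH1 : H1 = ((1 : ℝ)/2) • (F + Fᵀ)) (hN : N = ((1 : ℝ)/2) • (F - Fᵀ))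
    (hH1pd : H1.PosDef) (hH2pd : H2.PosDef)
    (hNnorm : wnorm H1 H1⁻¹ N ≤ η)
    (hBnorm : wnorm H1 H2⁻¹ B ≤ C₁)
    (hinfsup : ∀ x : Fin m → ℝ, x ≠ 0 → C₂ * vnorm H2 x ≤ vnorm H1⁻¹ (Bᵀ *ᵥ x))
    (K MU H : Matrix (Fin n ⊕ Fin m) (Fin n ⊕ Fin m) ℝ)
    (hK : K = fromBlocks F Bᵀ B 0)
    (hMU : MU = fromBlocks F Bᵀ 0 H2)
    (hH : H = fromBlocks H1 0 0 H2) :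
    wnorm H H (MU⁻¹ * K)⁻¹ ≤ 2 + (2 * C₁ ^ 2 + C₁ + 1) * (1 + η) ^ 2 / C₂ ^ 2 := by
  have hC₁ : 0 ≤ C₁ := (wnorm_nonneg _ _ _).trans hBnorm
  have hF :=
    vnorm_inv_mulVec_le_of_symmPart hH1 hN hH1pd (vnorm_mulVec_le_of_wnorm_le hH1pd hNnorm)
  have hinf : ∀ q, C₂ * vnorm H2 q ≤ vnorm H1⁻¹ (Bᵀ *ᵥ q) := fun q => by
    rcases eq_or_ne q 0 with rfl | hq
    · simp
    · exact hinfsup q hq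
  have hMUdet : IsUnit MU.det := by
    rw [hMU, det_fromBlocks_zero₂₁]
    exact (mul_ne_zero (det_ne_zero_of_posDef_symmPart (hH1 ▸ hH1pd)) hH2pd.det_pos.ne').isUnit
  have hγ : 0 ≤ (1 + η) ^ 2 / C₂ ^ 2 := by positivity
  calc wnorm H H (MU⁻¹ * K)⁻¹ ≤ 1 + (C₁ ^ 2 + 1) * ((1 + η) ^ 2 / C₂ ^ 2) := by
        refine wnorm_inv_le (by positivity) fun w => ?_
        rw [hH]
        refine vnorm_le_of_fromBlocks_mulVec_eq hH1 hH1pd hH2pd hC₁ hC2 hF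
          (vnorm_mulVec_le_of_wnorm_le hH1pd hBnorm) hinf ?_
        rw [← hK, ← hMU, mulVec_mulVec, ← Matrix.mul_assoc, mul_nonsing_inv _ hMUdet,
          Matrix.one_mul]
    _ ≤ 2 + (2 * C₁ ^ 2 + C₁ + 1) * (1 + η) ^ 2 / C₂ ^ 2 := by
        rw [mul_div_assoc]
        nlinarith [mul_nonneg (add_nonneg (sq_nonneg C₁) hC₁) hγ]

theorem stmt_6
    {n m : ℕ} (F : Matrix (Fin n) (Fin n) ℝ) (B : Matrix (Fin m) (Fin n) ℝ)
    (H1 N : Matrix (Fin n) (Fin n) ℝ) (H2 : Matrix (Fin m) (Fin m) ℝ)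
    (η C₁ C₂ : ℝ) (hη : 0 < η) (hC1 : 0 < C₁) (hC2 : 0 < C₂)
    (hH1 : H1 = ((1 : ℝ)/2) • (F + Fᵀ)) (hN : N = ((1 : ℝ)/2) • (F - Fᵀ))
    (hH1pd : H1.PosDef) (hH2pd : H2.PosDef)
    (hBrank : B.rank = m)
    (hNnorm : wnorm H1 H1⁻¹ N ≤ η)
    (hBnorm : wnorm H1 H2⁻¹ B ≤ C₁)
    (hinfsup : ∀ x : Fin m → ℝ, x ≠ 0 → C₂ * vnorm H2 x ≤ vnorm H1⁻¹ (Bᵀ *ᵥ x))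
    (K MU H : Matrix (Fin n ⊕ Fin m) (Fin n ⊕ Fin m) ℝ)
    (hK : K = fromBlocks F Bᵀ B 0)
    (hMU : MU = fromBlocks F Bᵀ 0 H2)
    (hH : H = fromBlocks H1 0 0 H2) :
    wnorm H H (MU⁻¹ * K)⁻¹ ≤ 2 + (2 * C₁ ^ 2 + C₁ + 1) * (1 + η) ^ 2 / C₂ ^ 2 :=
  stmt_6_general F B H1 N H2 η C₁ C₂ hC2 hH1 hN hH1pd hH2pd hNnorm hBnorm hinfsup K MU H hK hMU hH
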